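/- Let (Ω, μ) be a finite measure space and r : ℝ × Ω → Ω a measurable map such that for every θ ∈ ℝ the map r_θ := r(θ, ·) is measure-preserving for μ. Let B ⊆ Ω be a measurable set, u : Ω → ℝ a nonnegative integrable function, M > 0, and ε ≥ 0. If for every q ∈ Ω with u(q) ≤ M the Lebesgue measure of {θ ∈ [0, 2π] : r_θ(q) ∈ B} is at most ε, then μ(B) ≤ (∫_Ω u dμ)/M + (ε/(2π)) · μ(Ω). -/

import Mathlib

/-!
Integrate the fibre measure `q ↦ |{θ ∈ [0, 2π] : r_θ q ∈ B}|` over `Ω`. By Tonelli and the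
invariance of `μ` under every `r_θ`, the integral is `2π · μ B`. On the other hand the fibre
measure is at most `ε` where `u ≤ M` and at most `2π` elsewhere, and by Markov's inequality the
set `{u > M}` has measure at most `(∫ u dμ) / M`.
-/

open MeasureTheory
open scoped ENNReal

theorem lintegral_measure_fiber_eq_mul {α Ω : Type*} [MeasurableSpace α] [MeasurableSpace Ω]
    (ν : Measure α) (μ : Measure Ω) [SFinite ν] [SFinite μ]
    {r : α × Ω → Ω} (hr : Measurable r)
    (hrp : ∀ θ, MeasurePreserving (fun q => r (θ, q)) μ μ) {B : Set Ω} (hB : MeasurableSet B) :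
    ∫⁻ q, ν {θ | r (θ, q) ∈ B} ∂μ = ν Set.univ * μ B := by
  calc ∫⁻ q, ν {θ | r (θ, q) ∈ B} ∂μ = ν.prod μ (r ⁻¹' B) :=
        (Measure.prod_apply_symm (hr hB)).symm
    _ = ∫⁻ θ, μ ((fun q => r (θ, q)) ⁻¹' B) ∂ν := Measure.prod_apply (hr hB)
    _ = ν Set.univ * μ B := by
      simp only [fun θ => (hrp θ).measure_preimage hB.nullMeasurableSet, lintegral_const, mul_comm]

theorem lintegral_le_of_le_of_le_on_sublevelSet {Ω : Type*} [MeasurableSpace Ω] {μ : Measure Ω}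
    {f : Ω → ℝ≥0∞} {u : Ω → ℝ} (hu0 : ∀ q, 0 ≤ u q) (hu : Integrable u μ) {M : ℝ} (hM : 0 < M)
    {a c : ℝ≥0∞} (hc : c ≠ ∞) (hfc : ∀ q, f q ≤ c) (hfa : ∀ q, u q ≤ M → f q ≤ a) :
    ∫⁻ q, f q ∂μ ≤ a * μ Set.univ + c * ENNReal.ofReal ((∫ q, u q ∂μ) / M) := by
  -- Markov's inequality in pointwise form: `c ≤ c · u q / M` wherever `u q > M`.
  have hf : ∀ q, f q ≤ a + c * ENNReal.ofReal (u q / M) := by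
    intro q
    rcases le_or_gt (u q) M with hqM | hqM
    · exact le_add_right (hfa q hqM)
    · have : 1 ≤ ENNReal.ofReal (u q / M) := by
        rw [ENNReal.one_le_ofReal, one_le_div hM]; exact hqM.le
      exact le_add_left ((hfc q).trans (le_mul_of_one_le_right' this))
  have hmarkov : ∫⁻ q, ENNReal.ofReal (u q / M) ∂μ = ENNReal.ofReal ((∫ q, u q ∂μ) / M) := by
    rw [← integral_div, ofReal_integral_eq_lintegral_ofReal (hu.div_const M)
      (.of_forall fun q => div_nonneg (hu0 q) hM.le)]
  calc ∫⁻ q, f q ∂μ ≤ ∫⁻ q, a + c * ENNReal.ofReal (u q / M) ∂μ := lintegral_mono hf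
    _ = a * μ Set.univ + c * ENNReal.ofReal ((∫ q, u q ∂μ) / M) := by
      rw [lintegral_add_left measurable_const, lintegral_const, lintegral_const_mul' _ _ hc,
        hmarkov]

/-- Averaging plus Markov estimate: if `μ` is a finite measure preserved by each map
`r θ := r (θ, ·)`, `u` is a nonnegative integrable function, and for every `q` with
`u q ≤ M` the set of angles `θ ∈ [0, 2π]` with `r (θ, q) ∈ B` has Lebesgue measure at
most `ε`, then `μ B ≤ (∫ u dμ)/M + (ε/(2π)) · μ(Ω)`. -/
theorem measure_le_of_rotation_average
    {Ω : Type*} [MeasurableSpace Ω] (μ : Measure Ω) [IsFiniteMeasure μ]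
    (r : ℝ × Ω → Ω) (hr : Measurable r)
    (hrp : ∀ θ : ℝ, MeasurePreserving (fun q => r (θ, q)) μ μ)
    (B : Set Ω) (hB : MeasurableSet B)
    (u : Ω → ℝ) (hu0 : ∀ q, 0 ≤ u q) (hu : Integrable u μ)
    (M : ℝ) (hM : 0 < M) (ε : ℝ) (hε : 0 ≤ ε)
    (h : ∀ q : Ω, u q ≤ M →
      volume {θ ∈ Set.Icc (0 : ℝ) (2 * Real.pi) | r (θ, q) ∈ B} ≤ ENNReal.ofReal ε) :
    (μ B).toReal ≤ (∫ q, u q ∂μ) / M + (ε / (2 * Real.pi)) * (μ Set.univ).toReal := by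
  set ν : Measure ℝ := volume.restrict (Set.Icc 0 (2 * Real.pi))
  have hν : ν Set.univ = ENNReal.ofReal (2 * Real.pi) := by simp [ν, Real.volume_Icc]
  have hfiber : ∀ q, u q ≤ M → ν {θ | r (θ, q) ∈ B} ≤ ENNReal.ofReal ε := fun q hq => by
    rw [Measure.restrict_apply' measurableSet_Icc, Set.inter_comm]
    exact h q hq
  have hmain : ENNReal.ofReal (2 * Real.pi) * μ B ≤
      ENNReal.ofReal ε * μ Set.univ +
        ENNReal.ofReal (2 * Real.pi) * ENNReal.ofReal ((∫ q, u q ∂μ) / M) := by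
    rw [← hν, ← lintegral_measure_fiber_eq_mul ν μ hr hrp hB]
    exact lintegral_le_of_le_of_le_on_sublevelSet hu0 hu hM (measure_ne_top ν _)
      (fun q => measure_mono (Set.subset_univ _)) hfiber
  have hreal : 2 * Real.pi * (μ B).toReal ≤
      ε * (μ Set.univ).toReal + 2 * Real.pi * ((∫ q, u q ∂μ) / M) := by
    have := ENNReal.toReal_mono (by finiteness) hmain
    rwa [ENNReal.toReal_add (by finiteness) (by finiteness), ENNReal.toReal_mul,
      ENNReal.toReal_mul, ENNReal.toReal_mul, ENNReal.toReal_ofReal hε,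
      ENNReal.toReal_ofReal (by positivity),
      ENNReal.toReal_ofReal (div_nonneg (integral_nonneg hu0) hM.le)] at this
  have hπ : 0 < 2 * Real.pi := by positivity
  rw [div_mul_eq_mul_div, ← sub_le_iff_le_add', le_div_iff₀ hπ]
  linarith
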